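/- If two partial expressions e and e' are n-extensionally equivalent, then they are m-extensionally equivalent for every m > n. -/

import Mathlib

/-- A signature: function symbols and constructor symbols, each with an arity. -/
structure Sig where
  FS : Type
  CS : Type
  arityF : FS → ℕ
  arityC : CS → ℕ

/-- Applicative partial expressions over a signature.  Variables are natural
numbers and `bot` is the distinguished 0-ary constructor `⊥`. -/
inductive Exp (σ : Sig) : Type where
  | var : ℕ → Exp σ
  | fn : σ.FS → Exp σ
  | cn : σ.CS → Exp σ
  | bot : Exp σ
  | app : Exp σ → Exp σ → Exp σ

variable {σ : Sig}

/-- `applyList e [e1, …, en]` is the curried application `e e1 … en`. -/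
def applyList (e : Exp σ) (es : List (Exp σ)) : Exp σ := es.foldl Exp.app e

/-- Partial patterns `Pat_⊥`. -/
inductive IsPPat : Exp σ → Prop where
  | var (x : ℕ) : IsPPat (Exp.var x)
  | bot : IsPPat (Exp.bot : Exp σ)
  | capp (c : σ.CS) (ts : List (Exp σ)) (har : ts.length ≤ σ.arityC c)
      (hts : ∀ t ∈ ts, IsPPat t) : IsPPat (applyList (Exp.cn c) ts)
  | fapp (f : σ.FS) (ts : List (Exp σ)) (har : ts.length < σ.arityF f)
      (hts : ∀ t ∈ ts, IsPPat t) : IsPPat (applyList (Exp.fn f) ts)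

/-- The constructor `⊥` does not occur in the expression. -/
def BotFree : Exp σ → Prop
  | .bot => False
  | .app a b => BotFree a ∧ BotFree b
  | _ => True

/-- Total patterns `Pat`. -/
def IsPat (t : Exp σ) : Prop := IsPPat t ∧ BotFree t

/-- First-order patterns `FOPat`. -/
inductive IsFOPat : Exp σ → Prop where
  | var (x : ℕ) : IsFOPat (Exp.var x)
  | capp (c : σ.CS) (ts : List (Exp σ)) (har : ts.length = σ.arityC c)
      (hts : ∀ t ∈ ts, IsFOPat t) : IsFOPat (applyList (Exp.cn c) ts)

/-- The list of occurrences of variables in an expression. -/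
def occVars : Exp σ → List ℕ
  | .var x => [x]
  | .app a b => occVars a ++ occVars b
  | _ => []

/-- Applying a substitution to an expression. -/
def subst (θ : ℕ → Exp σ) : Exp σ → Exp σ
  | .var x => θ x
  | .fn f => .fn f
  | .cn c => .cn c
  | .bot => .bot
  | .app a b => .app (subst θ a) (subst θ b)

/-- Partial-pattern substitutions `PSubst_⊥`. -/
def PSub (θ : ℕ → Exp σ) : Prop := ∀ x, IsPPat (θ x)

/-- A program rule `f t1 … tn → r` (the left-hand side is `f` applied to `lhs`). -/
structure Rule (σ : Sig) where
  fn : σ.FS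
  lhs : List (Exp σ)
  rhs : Exp σ

/-- Well-formedness of a rule: `f` is applied to as many arguments as its arity,
the arguments form a linear tuple of total patterns. -/
def Rule.WF (r : Rule σ) : Prop :=
  r.lhs.length = σ.arityF r.fn ∧ (∀ t ∈ r.lhs, IsPat t) ∧
    (r.lhs.flatMap occVars).Nodup

/-- The rule has no extra variables: all variables of the right-hand side occur
in the left-hand side. -/
def Rule.NoExtra (r : Rule σ) : Prop :=
  ∀ x ∈ occVars r.rhs, x ∈ r.lhs.flatMap occVars

abbrev Program (σ : Sig) := Set (Rule σ)

/-- A program without extra variables, all whose rules are well formed. -/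
def WFProg (P : Program σ) : Prop := ∀ r ∈ P, r.WF ∧ r.NoExtra

/-- `h ∈ Σ` (a function symbol, a constructor symbol, or `⊥`). -/
def IsSymb : Exp σ → Prop
  | .fn _ => True
  | .cn _ => True
  | .bot => True
  | _ => False

/-- HOCRWL derivation trees for statements `e ⇒ t`, with rules
(B), (RR), (DC) and (OR). -/
inductive DTree (P : Program σ) : Exp σ → Exp σ → Type where
  | bot (e : Exp σ) : DTree P e Exp.bot
  | rr (x : ℕ) : DTree P (Exp.var x) (Exp.var x)
  | dc (h : Exp σ) (es ts : List (Exp σ)) (hsym : IsSymb h)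
      (hlen : es.length = ts.length) (hpat : IsPPat (applyList h ts))
      (ds : ∀ p ∈ es.zip ts, DTree P p.1 p.2) :
      DTree P (applyList h es) (applyList h ts)
  | opr (r : Rule σ) (hr : r ∈ P) (θ : ℕ → Exp σ) (hθ : PSub θ)
      (es as : List (Exp σ)) (t : Exp σ) (hlen : es.length = r.lhs.length)
      (ds : ∀ p ∈ es.zip (r.lhs.map (subst θ)), DTree P p.1 p.2)
      (d : DTree P (applyList (subst θ r.rhs) as) t) :
      DTree P (applyList (Exp.fn r.fn) (es ++ as)) t

/-- `P ⊢ e ⇒ t` is derivable in the HOCRWL proof calculus. -/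
def Deriv (P : Program σ) (e t : Exp σ) : Prop := Nonempty (DTree P e t)

/-- The HOCRWL denotation `⟦e⟧^P = { t ∈ Pat_⊥ | P ⊢ e ⇒ t }`. -/
def den (P : Program σ) (e : Exp σ) : Set (Exp σ) := {t | IsPPat t ∧ Deriv P e t}

/-- Observations: total patterns in the denotation. -/
def Obs (P : Program σ) (e : Exp σ) : Set (Exp σ) := {t | t ∈ den P e ∧ BotFree t}

/-- First-order observations: first-order patterns in the denotation. -/
def ObsFO (P : Program σ) (e : Exp σ) : Set (Exp σ) := {t | t ∈ den P e ∧ IsFOPat t}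

/-- Contexts `C ::= [ ] | C e | e C`. -/
inductive Cntxt (σ : Sig) : Type where
  | hole : Cntxt σ
  | appL : Cntxt σ → Exp σ → Cntxt σ
  | appR : Exp σ → Cntxt σ → Cntxt σ

/-- Filling the hole of a context with an expression. -/
def Cntxt.fill : Cntxt σ → Exp σ → Exp σ
  | .hole, e => e
  | .appL C e', e => .app (C.fill e) e'
  | .appR e' C, e => .app e' (C.fill e)

/-- Function symbols occurring in an expression. -/
def expFS : Exp σ → Set σ.FS
  | .fn f => {f}
  | .app a b => expFS a ∪ expFS b
  | _ => ∅

/-- Function symbols occurring in a rule. -/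
def ruleFS (r : Rule σ) : Set σ.FS :=
  insert r.fn ((⋃ t ∈ r.lhs, expFS t) ∪ expFS r.rhs)

/-- Function symbols occurring in a program. -/
def progFS (P : Program σ) : Set σ.FS := ⋃ r ∈ P, ruleFS r

/-- Function symbols defined by a program (roots of left-hand sides). -/
def defs (P : Program σ) : Set σ.FS := Rule.fn '' P

/-- `P'` is a safe extension of `(P, e)`: `P' = P ⊎ P''` where `P''` defines no
function symbol occurring in `P` or in `e`. -/
def SafeExt (P P' : Program σ) (e : Exp σ) : Prop :=
  ∃ P'' : Program σ, P' = P ∪ P'' ∧ Disjoint P P'' ∧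
    Disjoint (defs P'') (expFS e ∪ progFS P)

/-- `e ∼ₙ e'` : `n`-extensional equivalence. -/
def ExtEquiv (P : Program σ) (n : ℕ) (e e' : Exp σ) : Prop :=
  ∀ es : List (Exp σ), es.length = n →
    den P (applyList e es) = den P (applyList e' es)

/-!
The denotation of an application depends only on the denotation of the function part:
`⟦A c⟧ = ⋃_{p ∈ ⟦A⟧} ⟦p c⟧`. Indeed, a derivation of `A c ⇒ t` factors through a partial
pattern `A ⇒ p` followed by `p c ⇒ t`, and conversely a derivation `B ⇒ p` can be grafted
below any derivation from `p c₁ … cₖ`. Hence `e ∼ₙ e'` gives `e ∼ₙ₊₁ e'`, and the claim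
follows by induction on `m`.
-/

namespace List

variable {α β γ : Type*}

theorem forall₂_append_left_iff {R : α → β → Prop} {l₁ l₂ : List α} {m : List β} :
    Forall₂ R (l₁ ++ l₂) m ↔ ∃ m₁ m₂, m = m₁ ++ m₂ ∧ Forall₂ R l₁ m₁ ∧ Forall₂ R l₂ m₂ := by
  induction l₁ generalizing m with
  | nil => simp
  | cons a l₁ ih =>
    simp only [cons_append, forall₂_cons_left_iff, ih]
    constructor
    · rintro ⟨b, _, hab, ⟨m₁, m₂, rfl, h₁, h₂⟩, rfl⟩
      exact ⟨b :: m₁, m₂, rfl, ⟨b, m₁, hab, h₁, rfl⟩, h₂⟩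
    · rintro ⟨_, m₂, rfl, ⟨b, m₁, hab, h₁, rfl⟩, h₂⟩
      exact ⟨b, m₁ ++ m₂, hab, ⟨m₁, m₂, rfl, h₁, h₂⟩, rfl⟩

theorem forall₂_concat_left_iff {R : α → β → Prop} {l : List α} {a : α} {m : List β} :
    Forall₂ R (l ++ [a]) m ↔ ∃ m₀ b, m = m₀ ++ [b] ∧ Forall₂ R l m₀ ∧ R a b := by
  simp [forall₂_append_left_iff, forall₂_cons_left_iff, and_left_comm]

theorem Forall₂.trans_rel {R : α → β → Prop} {S : β → γ → Prop} {T : α → γ → Prop}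
    (hRS : ∀ a b c, R a b → S b c → T a c) {l₁ : List α} {l₂ : List β} {l₃ : List γ}
    (h₁₂ : Forall₂ R l₁ l₂) (h₂₃ : Forall₂ S l₂ l₃) : Forall₂ T l₁ l₃ := by
  induction h₁₂ generalizing l₃ with
  | nil => cases h₂₃; exact .nil
  | cons hab _ ih =>
    cases h₂₃ with
    | cons hbc h => exact .cons (hRS _ _ _ hab hbc) (ih h)

end List

open List

variable {σ : Sig} {P : Program σ}

section Spine

theorem applyList_nil (e : Exp σ) : applyList e [] = e := rfl

theorem applyList_append (e : Exp σ) (l l' : List (Exp σ)) :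
    applyList e (l ++ l') = applyList (applyList e l) l' :=
  foldl_append

theorem applyList_concat (e : Exp σ) (l : List (Exp σ)) (a : Exp σ) :
    applyList e (l ++ [a]) = .app (applyList e l) a := by
  rw [applyList_append]; rfl

def Exp.head : Exp σ → Exp σ
  | .app a _ => a.head
  | e => e

def Exp.args : Exp σ → List (Exp σ)
  | .app a b => a.args ++ [b]
  | _ => []

theorem head_applyList (e : Exp σ) (l : List (Exp σ)) : (applyList e l).head = e.head := by
  induction l generalizing e with
  | nil => rfl
  | cons a l ih => exact (ih _).trans rfl

theorem args_applyList (e : Exp σ) (l : List (Exp σ)) :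
    (applyList e l).args = e.args ++ l := by
  induction l generalizing e with
  | nil => simp [applyList_nil]
  | cons a l ih => exact (ih (e.app a)).trans (by simp [Exp.args])

theorem IsSymb.head_eq {h : Exp σ} (hh : IsSymb h) : h.head = h := by
  cases h <;> simp_all [IsSymb, Exp.head]

theorem IsSymb.args_eq {h : Exp σ} (hh : IsSymb h) : h.args = [] := by
  cases h <;> simp_all [IsSymb, Exp.args]

theorem applyList_inj {h h' : Exp σ} {l l' : List (Exp σ)} (hh : IsSymb h) (hh' : IsSymb h') :
    applyList h l = applyList h' l' ↔ h = h' ∧ l = l' := by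
  refine ⟨fun heq => ⟨?_, ?_⟩, fun ⟨rfl, rfl⟩ => rfl⟩
  · simpa [head_applyList, hh.head_eq, hh'.head_eq] using congrArg Exp.head heq
  · simpa [args_applyList, hh.args_eq, hh'.args_eq] using congrArg Exp.args heq

theorem applyList_ne_var {h : Exp σ} (hh : IsSymb h) (l : List (Exp σ)) (x : ℕ) :
    applyList h l ≠ .var x := fun heq => by
  have := congrArg Exp.head heq
  rw [head_applyList, hh.head_eq] at this
  subst this
  exact hh

theorem app_eq_applyList_iff {h A c : Exp σ} {l : List (Exp σ)} (hh : IsSymb h) :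
    Exp.app A c = applyList h l ↔ ∃ l₀, l = l₀ ++ [c] ∧ A = applyList h l₀ := by
  refine ⟨fun heq => ?_, fun ⟨l₀, hl, hA⟩ => by rw [hl, applyList_concat, hA]⟩
  rcases l.eq_nil_or_concat' with rfl | ⟨l₀, b, rfl⟩
  · cases h <;> simp_all [IsSymb, applyList_nil]
  · rw [applyList_concat] at heq
    injection heq with hA hc
    exact ⟨l₀, by rw [hc], hA⟩

theorem subst_applyList (θ : ℕ → Exp σ) (e : Exp σ) (l : List (Exp σ)) :
    subst θ (applyList e l) = applyList (subst θ e) (l.map (subst θ)) := by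
  induction l generalizing e with
  | nil => rfl
  | cons a l ih => exact ih (e.app a)

end Spine

section Patterns

theorem isSymb_fn (f : σ.FS) : IsSymb (Exp.fn f : Exp σ) := trivial

theorem isSymb_cn (c : σ.CS) : IsSymb (Exp.cn c : Exp σ) := trivial

theorem isSymb_bot : IsSymb (Exp.bot : Exp σ) := trivial

theorem IsPPat.applyList_inv {h : Exp σ} {ts : List (Exp σ)} (hh : IsSymb h)
    (hp : IsPPat (applyList h ts)) :
    (∀ t ∈ ts, IsPPat t) ∧ (h = .bot → ts = []) ∧
      (∀ f, h = .fn f → ts.length < σ.arityF f) ∧ (∀ c, h = .cn c → ts.length ≤ σ.arityC c) := by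
  generalize hE : applyList h ts = E at hp
  cases hp with
  | var x => exact absurd hE (applyList_ne_var hh ts x)
  | bot =>
    obtain ⟨rfl, rfl⟩ := (applyList_inj hh isSymb_bot).1 (hE.trans (applyList_nil _).symm)
    simp
  | capp c us har hts =>
    obtain ⟨rfl, rfl⟩ := (applyList_inj hh (isSymb_cn c)).1 hE
    simp_all
  | fapp f us har hts =>
    obtain ⟨rfl, rfl⟩ := (applyList_inj hh (isSymb_fn f)).1 hE
    simp_all

theorem IsPPat.of_mem_applyList {h : Exp σ} {ts : List (Exp σ)} (hh : IsSymb h)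
    (hp : IsPPat (applyList h ts)) {t : Exp σ} (ht : t ∈ ts) : IsPPat t :=
  (hp.applyList_inv hh).1 t ht

theorem IsPPat.eq_nil_of_applyList_bot {ts : List (Exp σ)} (hp : IsPPat (applyList .bot ts)) :
    ts = [] :=
  (hp.applyList_inv isSymb_bot).2.1 rfl

theorem IsPPat.length_lt_arityF {f : σ.FS} {ts : List (Exp σ)}
    (hp : IsPPat (applyList (.fn f) ts)) : ts.length < σ.arityF f :=
  (hp.applyList_inv (isSymb_fn f)).2.2.1 f rfl

theorem IsPPat.of_applyList_append {h : Exp σ} {l l' : List (Exp σ)} (hh : IsSymb h)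
    (hp : IsPPat (applyList h (l ++ l'))) : IsPPat (applyList h l) := by
  obtain ⟨hargs, hbot, hfn, hcn⟩ := hp.applyList_inv hh
  have hl : ∀ t ∈ l, IsPPat t := fun t ht => hargs t (mem_append_left _ ht)
  cases h with
  | fn f => exact .fapp f l (by have := hfn f rfl; simp at this; omega) hl
  | cn c => exact .capp c l (by have := hcn c rfl; simp at this; omega) hl
  | bot => rw [(append_eq_nil_iff.1 (hbot rfl)).1]; exact .bot
  | var | app => exact absurd hh id

theorem IsPPat.subst {θ : ℕ → Exp σ} (hθ : PSub θ) {t : Exp σ} (hp : IsPPat t) :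
    IsPPat (subst θ t) := by
  induction hp with
  | var x => exact hθ x
  | bot => exact .bot
  | capp c ts har _ ih =>
    rw [subst_applyList]
    exact .capp c _ (by simpa using har) (by simpa using ih)
  | fapp f ts har _ ih =>
    rw [subst_applyList]
    exact .fapp f _ (by simpa using har) (by simpa using ih)

end Patterns

namespace Deriv

theorem bot (e : Exp σ) : Deriv P e .bot := ⟨.bot e⟩

theorem dc {h : Exp σ} {es ts : List (Exp σ)} (hh : IsSymb h) (hpat : IsPPat (applyList h ts))
    (hd : Forall₂ (Deriv P) es ts) : Deriv P (applyList h es) (applyList h ts) :=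
  ⟨.dc h es ts hh hd.length_eq hpat fun _ hp => (forall₂_zip hd hp).some⟩

theorem opr {r : Rule σ} (hr : r ∈ P) {θ : ℕ → Exp σ} (hθ : PSub θ) {es as : List (Exp σ)}
    {t : Exp σ} (hd : Forall₂ (Deriv P) es (r.lhs.map (subst θ)))
    (d : Deriv P (applyList (subst θ r.rhs) as) t) :
    Deriv P (applyList (.fn r.fn) (es ++ as)) t :=
  ⟨.opr r hr θ hθ es as t (by simpa using hd.length_eq) (fun _ hp => (forall₂_zip hd hp).some)
    d.some⟩

@[elab_as_elim]
theorem induction {motive : Exp σ → Exp σ → Prop}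
    (bot : ∀ e, motive e .bot) (var : ∀ x, motive (.var x) (.var x))
    (dc : ∀ h es ts, IsSymb h → IsPPat (applyList h ts) →
      Forall₂ (fun e t => Deriv P e t ∧ motive e t) es ts →
      motive (applyList h es) (applyList h ts))
    (opr : ∀ r ∈ P, ∀ θ, PSub θ → ∀ es as t,
      Forall₂ (fun e t => Deriv P e t ∧ motive e t) es (r.lhs.map (subst θ)) →
      Deriv P (applyList (subst θ r.rhs) as) t → motive (applyList (subst θ r.rhs) as) t →
      motive (applyList (.fn r.fn) (es ++ as)) t)
    {e t : Exp σ} (d : Deriv P e t) : motive e t := by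
  obtain ⟨d⟩ := d
  induction d with
  | bot e => exact bot e
  | rr x => exact var x
  | dc h es ts hh hlen hpat ds ih =>
    exact dc h es ts hh hpat (forall₂_iff_zip.2 ⟨hlen, fun hp => ⟨⟨ds _ hp⟩, ih _ hp⟩⟩)
  | opr r hr θ hθ es as t hlen ds d ih ihd =>
    exact opr r hr θ hθ es as t
      (forall₂_iff_zip.2 ⟨by simpa using hlen, fun hp => ⟨⟨ds _ hp⟩, ih _ hp⟩⟩) ⟨d⟩ ihd

theorem cases_iff {e t : Exp σ} : Deriv P e t ↔ t = .bot ∨ (∃ x, e = .var x ∧ t = .var x) ∨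
    (∃ h es ts, IsSymb h ∧ IsPPat (applyList h ts) ∧ Forall₂ (Deriv P) es ts ∧
      e = applyList h es ∧ t = applyList h ts) ∨
    (∃ r ∈ P, ∃ θ, PSub θ ∧ ∃ es as, Forall₂ (Deriv P) es (r.lhs.map (subst θ)) ∧
      Deriv P (applyList (subst θ r.rhs) as) t ∧ e = applyList (.fn r.fn) (es ++ as)) := by
  constructor
  · exact Deriv.induction (fun _ => .inl rfl) (fun x => .inr (.inl ⟨x, rfl, rfl⟩))
      (fun h es ts hh hpat hd =>
        .inr (.inr (.inl ⟨h, es, ts, hh, hpat, hd.imp fun _ _ => And.left, rfl, rfl⟩)))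
      (fun r hr θ hθ es as _ hd d _ =>
        .inr (.inr (.inr ⟨r, hr, θ, hθ, es, as, hd.imp fun _ _ => And.left, d, rfl⟩)))
  · rintro (rfl | ⟨x, rfl, rfl⟩ | ⟨h, es, ts, hh, hpat, hd, rfl, rfl⟩ |
      ⟨r, hr, θ, hθ, es, as, hd, d, rfl⟩)
    exacts [bot _, ⟨.rr x⟩, dc hh hpat hd, opr hr hθ hd d]

theorem isPPat {e t : Exp σ} (d : Deriv P e t) : IsPPat t :=
  d.induction (fun _ => .bot) .var (fun _ _ _ _ hpat _ => hpat) fun _ _ _ _ _ _ _ _ _ ih => ih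

theorem refl {t : Exp σ} (hp : IsPPat t) : Deriv P t t := by
  induction hp with
  | var x => exact ⟨.rr x⟩
  | bot => exact bot _
  | capp c ts har hts ih => exact dc (isSymb_cn c) (.capp c ts har hts) (forall₂_same.2 ih)
  | fapp f ts har hts ih => exact dc (isSymb_fn f) (.fapp f ts har hts) (forall₂_same.2 ih)

end Deriv

theorem mem_den_iff {e t : Exp σ} : t ∈ den P e ↔ Deriv P e t :=
  ⟨And.right, fun d => ⟨d.isPPat, d⟩⟩

theorem Deriv.eq_bot_of_applyList_bot {cs : List (Exp σ)} {t : Exp σ}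
    (d : Deriv P (applyList .bot cs) t) : t = .bot := by
  rcases cases_iff.1 d with rfl | ⟨x, hx, -⟩ | ⟨h, _, ts, hh, hpat, -, he, rfl⟩ |
    ⟨r, -, -, -, _, _, -, -, he⟩
  · rfl
  · exact absurd hx (applyList_ne_var isSymb_bot cs x)
  · obtain ⟨rfl, -⟩ := (applyList_inj isSymb_bot hh).1 he
    rw [hpat.eq_nil_of_applyList_bot, applyList_nil]
  · exact absurd ((applyList_inj isSymb_bot (isSymb_fn r.fn)).1 he).1 (by simp)

theorem isPPat_applyList_fn_of_lhs_eq_append (hP : WFProg P) {r : Rule σ} (hr : r ∈ P)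
    {θ : ℕ → Exp σ} (hθ : PSub θ) {M M' : List (Exp σ)} (hM : r.lhs.map (subst θ) = M ++ M')
    (hM' : M' ≠ []) : IsPPat (applyList (.fn r.fn) M) := by
  obtain ⟨harity, hpats, -⟩ := (hP r hr).1
  refine .fapp r.fn M ?_ fun x hx => ?_
  · have hlen := congrArg length hM
    have := length_pos_iff.2 hM'
    simp only [length_map, length_append] at hlen
    omega
  · obtain ⟨q, hq, rfl⟩ := mem_map.1 (hM ▸ mem_append_left M' hx)
    exact (hpats q hq).1.subst hθ

theorem den_applyList_append_subset_of_forall₂ (hP : WFProg P) {h : Exp σ}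
    {es ts : List (Exp σ)} (hh : IsSymb h) (hpat : IsPPat (applyList h ts))
    (hdom : Forall₂ (fun e p => den P p ⊆ den P e) es ts) (cs : List (Exp σ)) :
    den P (applyList h (ts ++ cs)) ⊆ den P (applyList h (es ++ cs)) := by
  have hcomp {us : List (Exp σ)} : Forall₂ (Deriv P) ts us → Forall₂ (Deriv P) es us :=
    hdom.trans_rel fun _ _ _ hsub d => mem_den_iff.1 (hsub (mem_den_iff.2 d))
  intro t ht
  rw [mem_den_iff] at ht ⊢
  rcases Deriv.cases_iff.1 ht with rfl | ⟨x, hx, -⟩ | ⟨h', es', us, hh', hpat', hd, he, rfl⟩ |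
    ⟨r, hr, θ, hθ, es', as, hd, d, he⟩
  · exact Deriv.bot _
  · exact absurd hx (applyList_ne_var hh _ x)
  · obtain ⟨rfl, rfl⟩ := (applyList_inj hh hh').1 he
    obtain ⟨us₁, us₂, rfl, hd₁, hd₂⟩ := forall₂_append_left_iff.1 hd
    exact Deriv.dc hh hpat' (rel_append (hcomp hd₁) hd₂)
  · obtain ⟨rfl, hsplit⟩ := (applyList_inj hh (isSymb_fn r.fn)).1 he
    -- `ts` does not saturate `r.fn`, so the rule consumes all of `ts` and a prefix of `cs`
    have hlt : ts.length < es'.length := by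
      rw [hd.length_eq, length_map, (hP r hr).1.1]
      exact hpat.length_lt_arityF
    obtain ⟨cs₁, rfl, rfl⟩ : ∃ cs₁, es' = ts ++ cs₁ ∧ cs = cs₁ ++ as := by
      rcases append_eq_append_iff.1 hsplit with hcs | ⟨bs, rfl, -⟩
      · exact hcs
      · simp at hlt
    obtain ⟨L₁, L₂, hL, hd₁, hd₂⟩ := forall₂_append_left_iff.1 hd
    rw [← append_assoc]
    exact Deriv.opr hr hθ (hL ▸ rel_append (hcomp hd₁) hd₂) d

theorem den_applyList_subset_of_deriv (hP : WFProg P) {e p : Exp σ} (d : Deriv P e p)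
    (cs : List (Exp σ)) : den P (applyList p cs) ⊆ den P (applyList e cs) := by
  refine Deriv.induction
    (motive := fun e p => ∀ cs, den P (applyList p cs) ⊆ den P (applyList e cs))
    ?_ (fun _ _ => subset_rfl) ?_ ?_ d cs
  · intro e cs t ht
    rw [(mem_den_iff.1 ht).eq_bot_of_applyList_bot]
    exact mem_den_iff.2 (Deriv.bot _)
  · intro h es ts hh hpat hd cs
    simpa only [← applyList_append] using
      den_applyList_append_subset_of_forall₂ hP hh hpat (hd.imp fun _ _ h => h.2 []) cs
  · intro r hr θ hθ es as t hd _ ih cs t' ht'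
    have hrhs := mem_den_iff.1 (ih cs ht')
    rw [← applyList_append] at hrhs
    rw [← applyList_append, append_assoc, mem_den_iff]
    exact Deriv.opr hr hθ (hd.imp fun _ _ h => h.1) hrhs

theorem Deriv.exists_of_app (hP : WFProg P) {A c t : Exp σ} (d : Deriv P (.app A c) t) :
    ∃ p, Deriv P A p ∧ Deriv P (.app p c) t := by
  refine Deriv.induction
    (motive := fun E t => ∀ A, E = .app A c → ∃ p, Deriv P A p ∧ Deriv P (.app p c) t)
    (fun _ A _ => ⟨.bot, bot A, bot _⟩) (fun _ _ h => nomatch h) ?_ ?_ d A rfl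
  · intro h es ts hh hpat hd A hE
    obtain ⟨es₀, rfl, rfl⟩ := (app_eq_applyList_iff hh).1 hE.symm
    obtain ⟨ts₀, tc, rfl, hd₀, hc, -⟩ := forall₂_concat_left_iff.1 hd
    refine ⟨applyList h ts₀, dc hh (hpat.of_applyList_append hh) (hd₀.imp fun _ _ h => h.1), ?_⟩
    rw [← applyList_concat]
    refine dc hh hpat (rel_append (forall₂_same.2 fun x hx => refl ?_) (.cons hc .nil))
    exact hpat.of_mem_applyList hh (mem_append_left _ hx)
  · intro r hr θ hθ es as t hd d ih A hE
    rcases eq_nil_or_concat' as with rfl | ⟨as₀, c', rfl⟩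
    · -- the rule consumes `c`; `p` is its instantiated left-hand side without the last argument
      rw [append_nil] at hE
      obtain ⟨es₀, rfl, rfl⟩ := (app_eq_applyList_iff (isSymb_fn r.fn)).1 hE.symm
      obtain ⟨M, m, hM, hd₀, hc, -⟩ := forall₂_concat_left_iff.1 hd
      have hpatM := isPPat_applyList_fn_of_lhs_eq_append hP hr hθ hM (cons_ne_nil m [])
      refine ⟨applyList (.fn r.fn) M, dc (isSymb_fn r.fn) hpatM (hd₀.imp fun _ _ h => h.1), ?_⟩
      rw [← applyList_concat, ← append_nil (M ++ [c])]
      refine opr hr hθ (hM ▸ rel_append (forall₂_same.2 fun x hx => refl ?_) (.cons hc .nil)) d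
      exact hpatM.of_mem_applyList (isSymb_fn r.fn) hx
    · rw [← append_assoc, applyList_concat] at hE
      obtain ⟨rfl, rfl⟩ := Exp.app.inj hE
      obtain ⟨p, hp, hpc⟩ := ih _ (applyList_concat _ _ _)
      exact ⟨p, opr hr hθ (hd.imp fun _ _ h => h.1) hp, hpc⟩

theorem den_app (hP : WFProg P) (A c : Exp σ) :
    den P (.app A c) = ⋃ p ∈ den P A, den P (.app p c) := by
  ext t
  simp only [Set.mem_iUnion, mem_den_iff, exists_prop]
  refine ⟨Deriv.exists_of_app hP, fun ⟨p, hp, hpc⟩ => ?_⟩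
  exact mem_den_iff.1 (den_applyList_subset_of_deriv hP hp [c] (mem_den_iff.2 hpc))

theorem ExtEquiv.succ (hP : WFProg P) {n : ℕ} {e e' : Exp σ} (h : ExtEquiv P n e e') :
    ExtEquiv P (n + 1) e e' := by
  intro es hes
  obtain ⟨es₀, c, rfl⟩ := (eq_nil_or_concat' es).resolve_left (by rintro rfl; simp at hes)
  rw [applyList_concat, applyList_concat, den_app hP, den_app hP, h es₀ (by simpa using hes)]

/-- **Proposition 1(i)**: if `e ∼ₙ e'` then `e ∼ₘ e'` for all `m > n`. -/
theorem extEquiv_mono (σ : Sig) (P : Program σ) (hP : WFProg P)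
    (e e' : Exp σ) (n : ℕ) (h : ExtEquiv P n e e') :
    ∀ m, n < m → ExtEquiv P m e e' := by
  intro m hm
  induction m, hm using Nat.le_induction with
  | base => exact h.succ hP
  | succ k _ ih => exact ih.succ hP
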